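/- For every natural number p there exist p polynomials with integer coefficients in m variables whose sign functions form an independent set of attributes on ℝ^m; hence I(Tab(U(m))) = +∞ and for every table T ∈ Tab(U(m)) with cl(T) ≥ 2, R(T) ≥ log_3 cl(T). -/

import Mathlib

open scoped Classical

/-- A `B`-decision table: `dim` columns, rows are pairwise distinct tuples
from `B^dim` (a `Finset`), each row labeled by a decision `dec r : ℕ`. -/
structure Table (B : Type) [Fintype B] [DecidableEq B] where
  dim : ℕ
  rows : Finset (Fin dim → B)
  dec : (Fin dim → B) → ℕ

variable {B : Type} [Fintype B] [DecidableEq B]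

/-- number of rows N(T) -/
def Table.N (T : Table B) : ℕ := T.rows.card

/-- number of decision classes cl(T) -/
def Table.cl (T : Table B) : ℕ := (T.rows.image T.dec).card

/-- `T' ∈ [T]`: `T'` is obtained from `T` by removing columns (keeping an
order-preserving selection `φ` of columns), merging equal rows, and changing
decisions arbitrarily. -/
def SubTable (T T' : Table B) : Prop :=
  ∃ φ : Fin T'.dim → Fin T.dim, StrictMono φ ∧
    T'.rows = T.rows.image (fun r => r ∘ φ)

/-- closed class: C = ⋃_{T ∈ C} [T] -/
def IsClosedClass (C : Set (Table B)) : Prop :=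
  ∀ T ∈ C, ∀ T', SubTable T T' → T' ∈ C

/-- nondegenerate: number of rows of tables in C is unbounded -/
def Nondegenerate (C : Set (Table B)) : Prop :=
  ∀ m : ℕ, ∃ T ∈ C, m ≤ T.N

/-- a test: a set of columns separating any two rows with different decisions -/
def IsTest (T : Table B) (S : Finset (Fin T.dim)) : Prop :=
  ∀ r ∈ T.rows, ∀ r' ∈ T.rows, T.dec r ≠ T.dec r' → ∃ i ∈ S, r i ≠ r' i

/-- a reduct: a test no proper subset of which is a test -/
def IsReduct (T : Table B) (S : Finset (Fin T.dim)) : Prop :=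
  IsTest T S ∧ ∀ S' ⊂ S, ¬ IsTest T S'

/-- R(T): minimum cardinality of a reduct for T -/
noncomputable def R (T : Table B) : ℕ :=
  sInf {m | ∃ S : Finset (Fin T.dim), IsReduct T S ∧ S.card = m}

/-- quasicomplete: rows contain a product of two-element subsets of B -/
def Quasicomplete (T : Table B) : Prop :=
  ∃ Bs : Fin T.dim → Finset B, (∀ i, (Bs i).card = 2) ∧
    ∀ r : Fin T.dim → B, (∀ i, r i ∈ Bs i) → r ∈ T.rows

/-- I(T): maximum dimension of a quasicomplete table in [T] -/
noncomputable def Ival (T : Table B) : ℕ :=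
  sSup {d | ∃ T', SubTable T T' ∧ Quasicomplete T' ∧ T'.dim = d}

/-- N_C(n) = max { N(T) : T ∈ C, dim T ≤ n } -/
noncomputable def NC (C : Set (Table B)) (n : ℕ) : ℕ :=
  sSup {m | ∃ T ∈ C, T.dim ≤ n ∧ T.N = m}

/-- the decision table of the problem over attributes `f 0, …, f (n-1)`:
rows are exactly the tuples realized by objects of the universe. -/
noncomputable def probTable {A : Type} (n : ℕ) (f : Fin n → A → B)
    (d : (Fin n → B) → ℕ) : Table B :=
  ⟨n, Finset.univ.filter (fun r => ∃ a : A, ∀ i, r i = f i a), d⟩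

/-- Tab(U): decision tables of all problems over the information system
with universe `A` and attribute set `F`. -/
def Tab {A : Type} (F : Set (A → B)) : Set (Table B) :=
  {T | ∃ (n : ℕ) (f : Fin n → A → B) (d : (Fin n → B) → ℕ),
    (∀ i, f i ∈ F) ∧ T = probTable n f d}

/-- independence of a family of attributes -/
def Independent {A : Type} (p : ℕ) (f : Fin p → A → B) : Prop :=
  ∃ Bs : Fin p → Finset B, (∀ i, (Bs i).card = 2) ∧
    ∀ b : Fin p → B, (∀ i, b i ∈ Bs i) → ∃ a : A, ∀ i, f i a = b i

/-- F(m): sign functions of polynomials with integer coefficients in m variables -/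
noncomputable def Fsign (m : ℕ) : Set ((Fin m → ℝ) → SignType) :=
  {f | ∃ p : MvPolynomial (Fin m) ℤ,
    f = fun x : Fin m → ℝ => SignType.sign (MvPolynomial.aeval x p : ℝ)}

/-! Enumerate the `2^p` Boolean vectors `c` by distinct integers `k_c`. The `i`-th polynomial is
the square of `∏ (x_j - k_c)` over the `c` with `c i = false`, so at the point `x_j = k_c` its sign
is `0` or `+` according to `c i`: every product of the pairs `{0, +}` is realized.
For the bound on `R`, take a minimal test `S`: the decision of a row is a function of its
restriction to `S`, so `cl T ≤ 3 ^ |S|`. -/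

open MvPolynomial

theorem IsTest.dec_eq_of_eqOn {T : Table B} {S : Finset (Fin T.dim)} (hS : IsTest T S)
    {r r' : Fin T.dim → B} (hr : r ∈ T.rows) (hr' : r' ∈ T.rows) (h : ∀ i ∈ S, r i = r' i) :
    T.dec r = T.dec r' := by
  by_contra hne
  obtain ⟨i, hiS, hi⟩ := hS r hr r' hr' hne
  exact hi (h i hiS)

theorem Table.cl_le_card_pow_of_isTest (T : Table B) {S : Finset (Fin T.dim)} (hS : IsTest T S) :
    T.cl ≤ Fintype.card B ^ S.card := by
  let restrict : (Fin T.dim → B) → S → B := fun r i => r i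
  let rowRestrict : T.rows → S → B := fun r => restrict r
  have hfactor : Function.FactorsThrough (fun r : T.rows => T.dec r) rowRestrict :=
    fun r r' h => hS.dec_eq_of_eqOn r.2 r'.2 fun i hi => congrFun h ⟨i, hi⟩
  have hsurj : Set.SurjOn (Function.extend rowRestrict (fun r => T.dec r) 0)
      (T.rows.image restrict) (T.rows.image T.dec) := by
    rintro _ hd
    obtain ⟨r, hr, rfl⟩ := Finset.mem_coe.1 hd |> Finset.mem_image.1
    exact ⟨restrict r, Finset.mem_image_of_mem _ hr, hfactor.extend_apply _ ⟨r, hr⟩⟩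
  calc T.cl ≤ (T.rows.image restrict).card := Finset.card_le_card_of_surjOn _ hsurj
    _ ≤ Fintype.card (S → B) := Finset.card_le_univ _
    _ = Fintype.card B ^ S.card := by rw [Fintype.card_fun, Fintype.card_coe]

theorem isTest_univ (T : Table B) : IsTest T Finset.univ := by
  intro r _ r' _ hne
  obtain ⟨i, hi⟩ := Function.ne_iff.1 fun h => hne (congrArg T.dec h)
  exact ⟨i, Finset.mem_univ i, hi⟩

theorem exists_isReduct_card_eq_R (T : Table B) :
    ∃ S : Finset (Fin T.dim), IsReduct T S ∧ S.card = R T := by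
  obtain ⟨S, hS⟩ := exists_minimal_of_wellFoundedLT (IsTest T) ⟨Finset.univ, isTest_univ T⟩
  have hreduct : IsReduct T S := ⟨hS.prop, fun _ hlt => hS.not_prop_of_lt hlt⟩
  exact Nat.sInf_mem (s := {k | ∃ S, IsReduct T S ∧ S.card = k}) ⟨S.card, S, hreduct, rfl⟩

theorem Table.logb_cl_le_R (T : Table B) (hB : 1 < Fintype.card B) (hcl : 0 < T.cl) :
    Real.logb (Fintype.card B) T.cl ≤ R T := by
  obtain ⟨S, hS, hcard⟩ := exists_isReduct_card_eq_R T
  rw [Real.logb_le_iff_le_rpow (by exact_mod_cast hB) (by exact_mod_cast hcl), Real.rpow_natCast]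
  exact_mod_cast hcard ▸ T.cl_le_card_pow_of_isTest hS.1

theorem independent_of_forall_bool {A E : Type} [DecidableEq E] {p : ℕ} (f : Fin p → A → E)
    {u v : E} (huv : u ≠ v) (a : (Fin p → Bool) → A) (ha : ∀ c i, f i (a c) = bif c i then u else v) :
    Independent p f := by
  refine ⟨fun _ => {u, v}, fun _ => Finset.card_pair huv, fun b hb => ?_⟩
  refine ⟨a fun i => decide (b i = u), fun i => ?_⟩
  rw [ha]
  rcases Finset.mem_insert.1 (hb i) with hu | hv
  · simp [hu]
  · simp [Finset.mem_singleton.1 hv, huv.symm]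

theorem quasicomplete_probTable {A : Type} {n : ℕ} {f : Fin n → A → B} (hf : Independent n f)
    (d : (Fin n → B) → ℕ) : Quasicomplete (probTable n f d) := by
  obtain ⟨Bs, hBs, hrealized⟩ := hf
  refine ⟨Bs, hBs, fun r hr => ?_⟩
  obtain ⟨a, ha⟩ := hrealized r hr
  exact Finset.mem_filter.2 ⟨Finset.mem_univ r, a, fun i => (ha i).symm⟩

theorem sign_aeval_prod_X_sub_C_sq {m : ℕ} (j : Fin m) (s : Finset ℤ) {x : Fin m → ℝ} {k : ℤ}
    (hx : x j = k) :
    SignType.sign (aeval x ((∏ a ∈ s, (X j - C a)) ^ 2 : MvPolynomial (Fin m) ℤ))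
      = if k ∈ s then 0 else 1 := by
  have hprod : (∏ a ∈ s, ((k : ℝ) - a) = 0) ↔ k ∈ s := by
    simp [Finset.prod_eq_zero_iff, sub_eq_zero]
  simp only [map_pow, map_prod, map_sub, aeval_X, eq_intCast, map_intCast, hx]
  split_ifs with hk
  · simp [hprod.2 hk]
  · exact sign_pos (sq_pos_of_ne_zero (mt hprod.1 hk))

theorem exists_independent_fsign {m : ℕ} (j : Fin m) (p : ℕ) :
    ∃ f : Fin p → (Fin m → ℝ) → SignType, (∀ i, f i ∈ Fsign m) ∧ Independent p f := by
  let code : (Fin p → Bool) → ℤ := fun c => (Fintype.equivFin _ c : ℕ)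
  have hcode : Function.Injective code :=
    Nat.cast_injective.comp (Fin.val_injective.comp (Fintype.equivFin _).injective)
  let zeros : Fin p → Finset ℤ := fun i => ({c | c i = false} : Finset _).image code
  let P : Fin p → MvPolynomial (Fin m) ℤ := fun i => (∏ a ∈ zeros i, (X j - C a)) ^ 2
  refine ⟨fun i x => SignType.sign (aeval x (P i)), fun i => ⟨P i, rfl⟩,
    independent_of_forall_bool _ (by decide : (1 : SignType) ≠ 0) (fun c _ => code c)
      fun c i => ?_⟩
  have hzeros : code c ∈ zeros i ↔ c i = false := by simp [zeros, hcode.eq_iff]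
  rw [sign_aeval_prod_X_sub_C_sq j (zeros i) rfl]
  cases hci : c i <;> simp [hzeros, hci]

theorem stmt_19 (m : ℕ) (hm : 1 ≤ m) :
    (∀ p : ℕ, ∃ f : Fin p → (Fin m → ℝ) → SignType,
        (∀ i, f i ∈ Fsign m) ∧ Independent p f) ∧
    (∀ n : ℕ, ∃ T ∈ Tab (Fsign m), T.dim = n ∧ Quasicomplete T) ∧
    (∀ T ∈ Tab (Fsign m), 2 ≤ T.cl → Real.logb 3 T.cl ≤ (R T : ℝ)) := by
  have hindep := exists_independent_fsign (⟨0, hm⟩ : Fin m)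
  refine ⟨hindep, fun n => ?_, fun T _ hcl => ?_⟩
  · obtain ⟨f, hF, hf⟩ := hindep n
    exact ⟨probTable n f 0, ⟨n, f, 0, hF, rfl⟩, rfl, quasicomplete_probTable hf 0⟩
  · have hcard : Fintype.card SignType = 3 := rfl
    simpa [hcard] using T.logb_cl_le_R (by decide) (by omega)
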